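/- Let X ⊆ ℝ^d be a G-stable subset (g·x ∈ X for every g ∈ G and x ∈ X). Then the restriction π|X : X → π(X), where X and π(X) carry the subspace topologies, is proper (the preimage of every compact subset of π(X) is compact), is a closed map, and is an open map. -/

import Mathlib

open MvPolynomial

/-- The matrix associated to an element of a subgroup of the orthogonal group `O(d, ℝ)`. -/
def matOf {d : ℕ} (G : Subgroup (Matrix.orthogonalGroup (Fin d) ℝ)) (g : G) :
    Matrix (Fin d) (Fin d) ℝ :=
  ((g : Matrix.orthogonalGroup (Fin d) ℝ) : Matrix (Fin d) (Fin d) ℝ)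

/-!
Because the `pᵢ` generate all invariants, two kinds of invariant polynomials become polynomials
in `π`. The invariant `∏_g ‖X - g x‖²` vanishes exactly on the orbit `G x`, so the fibres of `π`
are the `G`-orbits; and `‖x‖²` is a polynomial in `π x`, so `π` is a proper map `ℝ^d → ℝ^m`.
A `G`-stable `X` is then `π`-saturated, so `π|X` is the base change of `π` to `π(X)`, hence
proper and closed. Being a closed surjection it is a quotient map, and the saturation of an open
subset of `X` is the union of its translates, so `π|X` is also open.
-/

open Matrix

section ProperMaps

variable {α β : Type*} [TopologicalSpace α] [TopologicalSpace β]

lemma isProperMap_of_norm_le_comp {E : Type*} [NormedAddCommGroup E] [ProperSpace E]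
    [T2Space β] [WeaklyLocallyCompactSpace β] {f : E → β} (hf : Continuous f) {h : β → ℝ}
    (hh : Continuous h) (hle : ∀ x, ‖x‖ ≤ h (f x)) : IsProperMap f := by
  refine isProperMap_iff_isCompact_preimage.mpr ⟨hf, fun K hK => ?_⟩
  obtain ⟨C, hC⟩ := (hK.image hh).bddAbove
  refine Metric.isCompact_of_isClosed_isBounded (hK.isClosed.preimage hf) ?_
  exact isBounded_iff_forall_norm_le.mpr ⟨C, fun x hx => (hle x).trans (hC ⟨f x, hx, rfl⟩)⟩

lemma IsProperMap.restrict_image {f : α → β} (hf : IsProperMap f) {X : Set α}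
    (hX : f ⁻¹' (f '' X) ⊆ X) : IsProperMap ((Set.mapsTo_image f X).restrict f X (f '' X)) :=
  (hf.restrictPreimage (f '' X)).comp
    (Homeomorph.setCongr ((Set.subset_preimage_image f X).antisymm hX)).isProperMap

lemma Topology.IsQuotientMap.isOpenMap_of_fiber_subset_orbit {ι : Type*} {f : α → β}
    (hf : IsQuotientMap f) (φ : ι → α → α) (hφ : ∀ i, Continuous (φ i))
    (hfφ : ∀ i x, f (φ i x) = f x) (hfib : ∀ x y, f x = f y → ∃ i, y = φ i x) :
    IsOpenMap f := by
  intro U hU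
  have hsat : f ⁻¹' (f '' U) = ⋃ i, φ i ⁻¹' U := by
    ext x
    simp only [Set.mem_preimage, Set.mem_image, Set.mem_iUnion]
    constructor
    · rintro ⟨u, hu, hux⟩
      obtain ⟨i, rfl⟩ := hfib x u hux.symm
      exact ⟨i, hu⟩
    · rintro ⟨i, hi⟩
      exact ⟨φ i x, hi, hfφ i x⟩
  rw [← hf.isOpen_preimage, hsat]
  exact isOpen_iUnion fun i => hU.preimage (hφ i)

end ProperMaps

lemma norm_le_sqrt_dotProduct_self {ι : Type*} [Fintype ι] (x : ι → ℝ) :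
    ‖x‖ ≤ √(x ⬝ᵥ x) := by
  refine (pi_norm_le_iff_of_nonneg (Real.sqrt_nonneg _)).mpr fun i => ?_
  rw [Real.norm_eq_abs, ← Real.sqrt_sq_eq_abs]
  refine Real.sqrt_le_sqrt ?_
  simpa [dotProduct, sq] using
    Finset.single_le_sum (fun j _ => mul_self_nonneg (x j)) (Finset.mem_univ i)

lemma dotProduct_mulVec_mulVec_of_mem_orthogonalGroup {n R : Type*} [Fintype n]
    [DecidableEq n] [CommRing R] {A : Matrix n n R} (hA : A ∈ orthogonalGroup n R) (v w : n → R) :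
    A *ᵥ v ⬝ᵥ A *ᵥ w = v ⬝ᵥ w := by
  rw [dotProduct_mulVec, ← vecMul_transpose, vecMul_vecMul, (mem_orthogonalGroup_iff' n R).1 hA,
    vecMul_one]

namespace MvPolynomial

variable {R σ ι : Type*}

noncomputable def polyMap [CommSemiring R] (p : ι → MvPolynomial σ R) (x : σ → R) : ι → R :=
  fun i => eval x (p i)

lemma continuous_polyMap [CommSemiring R] [TopologicalSpace R] [IsTopologicalSemiring R]
    (p : ι → MvPolynomial σ R) : Continuous (polyMap p) :=
  continuous_pi fun i => continuous_eval (p i)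

lemma exists_eval_eq_eval_polyMap_of_mem_adjoin [CommSemiring R] {p : ι → MvPolynomial σ R}
    {f : MvPolynomial σ R} (hf : f ∈ Algebra.adjoin R (Set.range p)) :
    ∃ q : MvPolynomial ι R, ∀ x, eval x f = eval (polyMap p x) q := by
  rw [Algebra.adjoin_range_eq_range_aeval] at hf
  obtain ⟨q, rfl⟩ := hf
  refine ⟨q, fun x => ?_⟩
  rw [AlgHom.toRingHom_eq_coe, RingHom.coe_coe, aeval_eq_bind₁]
  exact eval₂Hom_bind₁ _ _ _ _

noncomputable def sqDistPoly [CommRing R] [Fintype σ] (a : σ → R) : MvPolynomial σ R :=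
  ∑ i, (X i - C (a i)) ^ 2

lemma eval_sqDistPoly [CommRing R] [Fintype σ] (a x : σ → R) :
    eval x (sqDistPoly a) = (x - a) ⬝ᵥ (x - a) := by
  simp [sqDistPoly, dotProduct, sq]

end MvPolynomial

section Invariants

variable {d : ℕ} (G : Subgroup (orthogonalGroup (Fin d) ℝ))

def IsInvariantPoly (f : MvPolynomial (Fin d) ℝ) : Prop :=
  ∀ (g : G) (x : Fin d → ℝ), eval (matOf G g *ᵥ x) f = eval x f

lemma matOf_mem_orthogonalGroup (g : G) : matOf G g ∈ orthogonalGroup (Fin d) ℝ :=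
  (g : orthogonalGroup (Fin d) ℝ).2

lemma matOf_mul (g h : G) : matOf G (g * h) = matOf G g * matOf G h := rfl

lemma isInvariantPoly_sqDistPoly_zero : IsInvariantPoly G (sqDistPoly 0) := by
  intro g x
  simp only [eval_sqDistPoly, sub_zero]
  exact dotProduct_mulVec_mulVec_of_mem_orthogonalGroup (matOf_mem_orthogonalGroup G g) x x

lemma isInvariantPoly_prod_sqDistPoly_orbit [Fintype G] (x : Fin d → ℝ) :
    IsInvariantPoly G (∏ g : G, sqDistPoly (matOf G g *ᵥ x)) := by
  intro h w
  simp only [map_prod, eval_sqDistPoly]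
  refine Fintype.prod_equiv (Equiv.mulLeft h⁻¹) _ _ fun g => ?_
  have hsub :
      matOf G h *ᵥ w - matOf G g *ᵥ x = matOf G h *ᵥ (w - matOf G (h⁻¹ * g) *ᵥ x) := by
    rw [mulVec_sub, mulVec_mulVec, ← matOf_mul, mul_inv_cancel_left]
  rw [hsub, dotProduct_mulVec_mulVec_of_mem_orthogonalGroup (matOf_mem_orthogonalGroup G h)]
  rfl

variable {G} {m : ℕ} {p : Fin m → MvPolynomial (Fin d) ℝ}

lemma exists_eq_mulVec_of_polyMap_eq [Finite G]
    (hgen : ∀ f, IsInvariantPoly G f → f ∈ Algebra.adjoin ℝ (Set.range p)) {x z : Fin d → ℝ}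
    (hxz : polyMap p x = polyMap p z) : ∃ g : G, z = matOf G g *ᵥ x := by
  have := Fintype.ofFinite G
  by_contra! hz
  set r := ∏ g : G, sqDistPoly (matOf G g *ᵥ x)
  obtain ⟨q, hq⟩ :=
    exists_eval_eq_eval_polyMap_of_mem_adjoin (hgen r (isInvariantPoly_prod_sqDistPoly_orbit G x))
  have hrx : eval x r = 0 := by
    simp only [r, map_prod, eval_sqDistPoly]
    exact Finset.prod_eq_zero (Finset.mem_univ 1) (by simp [matOf])
  have hrz : eval z r ≠ 0 := by
    simp only [r, map_prod, eval_sqDistPoly]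
    exact Finset.prod_ne_zero_iff.mpr fun g _ =>
      dotProduct_self_eq_zero.not.mpr (sub_ne_zero.mpr (hz g))
  exact hrz (by rw [hq, ← hxz, ← hq, hrx])

lemma isProperMap_polyMap
    (hgen : ∀ f, IsInvariantPoly G f → f ∈ Algebra.adjoin ℝ (Set.range p)) :
    IsProperMap (polyMap p) := by
  obtain ⟨q, hq⟩ :=
    exists_eval_eq_eval_polyMap_of_mem_adjoin (hgen _ (isInvariantPoly_sqDistPoly_zero G))
  refine isProperMap_of_norm_le_comp (continuous_polyMap p)
    (Real.continuous_sqrt.comp (continuous_eval q)) fun x => ?_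
  simpa [← hq, eval_sqDistPoly] using norm_le_sqrt_dotProduct_self x

end Invariants

/-- If `X ⊆ ℝ^d` is `G`-stable, the restriction `π|X : X → π(X)` of the geometric quotient
map (with subspace topologies) is proper, closed and open. -/
theorem stmt2 {d m : ℕ}
    (G : Subgroup (Matrix.orthogonalGroup (Fin d) ℝ)) [Finite G]
    (p : Fin m → MvPolynomial (Fin d) ℝ)
    (hinv : ∀ (i : Fin m) (g : G) (x : Fin d → ℝ),
      eval ((matOf G g).mulVec x) (p i) = eval x (p i))
    (hgen : ∀ f : MvPolynomial (Fin d) ℝ,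
      (∀ (g : G) (x : Fin d → ℝ), eval ((matOf G g).mulVec x) f = eval x f) →
        f ∈ Algebra.adjoin ℝ (Set.range p))
    (π : (Fin d → ℝ) → (Fin m → ℝ))
    (hπ : ∀ (x : Fin d → ℝ) (i : Fin m), π x i = eval x (p i))
    (X : Set (Fin d → ℝ))
    (hX : ∀ (g : G), ∀ x ∈ X, (matOf G g).mulVec x ∈ X) :
    (∀ K : Set ↥(π '' X), IsCompact K →
      IsCompact ((Set.mapsTo_image π X).restrict π X (π '' X) ⁻¹' K)) ∧
    IsClosedMap ((Set.mapsTo_image π X).restrict π X (π '' X)) ∧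
    IsOpenMap ((Set.mapsTo_image π X).restrict π X (π '' X)) := by
  obtain rfl : π = polyMap p := funext fun x => funext (hπ x)
  have hsat : polyMap p ⁻¹' (polyMap p '' X) ⊆ X := by
    rintro z ⟨x, hx, hxz⟩
    obtain ⟨g, rfl⟩ := exists_eq_mulVec_of_polyMap_eq hgen hxz
    exact hX g x hx
  have hρ := (isProperMap_polyMap hgen).restrict_image hsat
  refine ⟨fun K hK => hρ.isCompact_preimage hK, hρ.isClosedMap, ?_⟩
  have hquot := hρ.isClosedMap.isQuotientMap hρ.continuous
    (Set.surjective_mapsTo_image_restrict (polyMap p) X)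
  refine hquot.isOpenMap_of_fiber_subset_orbit (fun g x => ⟨matOf G g *ᵥ x, hX g x x.2⟩)
    (fun g => (continuous_const.matrix_mulVec continuous_subtype_val).subtype_mk _)
    (fun g x => Subtype.ext (funext fun i => hinv i g x)) fun x y hxy => ?_
  obtain ⟨g, hg⟩ := exists_eq_mulVec_of_polyMap_eq hgen (congrArg Subtype.val hxy)
  exact ⟨g, Subtype.ext hg⟩
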